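/- Let G be an n-vertex Class 2 simple graph with maximum degree Δ having a full-deficiency pair (a,b) such that ab is a critical edge of G. Then for every vertex x ∈ V(G) ∖ {a,b} with dist_G(x,{a,b}) = 2, we have d_G(x) ≥ Δ−1; furthermore, if d_G(a) < Δ and d_G(b) < Δ, then d_G(x) = Δ. -/

import Mathlib

/-- `c` is a proper edge coloring of `G` using colors in `{1, …, k}`:
every edge gets a color in `[1,k]`, and distinct edges sharing an endpoint
get distinct colors. -/
def IsEdgeColoring {V : Type*} (G : SimpleGraph V) (k : ℕ) (c : Sym2 V → ℕ) : Prop :=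
  (∀ e ∈ G.edgeSet, 1 ≤ c e ∧ c e ≤ k) ∧
    ∀ e ∈ G.edgeSet, ∀ f ∈ G.edgeSet, e ≠ f → (∃ v, v ∈ e ∧ v ∈ f) → c e ≠ c f

/-- The chromatic index `χ'(G)`: the least `k` admitting a proper edge `k`-coloring. -/
noncomputable def chromIndex {V : Type*} (G : SimpleGraph V) : ℕ :=
  sInf {k | ∃ c, IsEdgeColoring G k c}

/-- An edge `e` of `G` is critical if `χ'(G-e) < χ'(G)`. -/
def IsCriticalEdge {V : Type*} (G : SimpleGraph V) (e : Sym2 V) : Prop :=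
  e ∈ G.edgeSet ∧ chromIndex (G.deleteEdges {e}) < chromIndex G

/-- The set of colors of `[1,k]` missing at `v` under the coloring `c` of `G`. -/
def missingColors {V : Type*} (G : SimpleGraph V) (k : ℕ) (c : Sym2 V → ℕ) (v : V) : Set ℕ :=
  {α | 1 ≤ α ∧ α ≤ k ∧ ∀ e ∈ G.edgeSet, v ∈ e → c e ≠ α}

/-- `G` is `Δ`-critical: `Δ` is the maximum degree of `G`, `χ'(G) = Δ+1`, and every
proper subgraph has chromatic index less than `Δ+1`. -/
def IsDeltaCritical {V : Type*} [Fintype V] (G : SimpleGraph V) [DecidableRel G.Adj]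
    (Δ : ℕ) : Prop :=
  G.maxDegree = Δ ∧ chromIndex G = Δ + 1 ∧
    ∀ H : SimpleGraph V, H ≤ G → H ≠ G → chromIndex H < Δ + 1

/-- A Kierstead path `(v₀, v₀v₁, v₁, …, v_{p-1}v_p, v_p)` with respect to the edge
`v₀v₁` and a `k`-coloring `c` of `G - v₀v₁`, encoded by the list `P = [v₀, …, v_p]`. -/
structure IsKiersteadPath {V : Type*} (G : SimpleGraph V) (k : ℕ) (c : Sym2 V → ℕ)
    (P : List V) : Prop where
  two_le : 2 ≤ P.length
  nodup : P.Nodup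
  adj : ∀ (i : ℕ) (h : i + 1 < P.length), G.Adj (P[i]'(by omega)) (P[i+1]'h)
  color : ∀ (i : ℕ) (h : i + 1 < P.length), 1 ≤ i →
      ∃ (j : ℕ) (_ : j ≤ i),
        c (s(P[i]'(by omega), P[i+1]'h)) ∈
          missingColors (G.deleteEdges {s(P[0]'(by omega), P[1]'(by omega))}) k c
            (P[j]'(by omega))

/-- A multifan centered at `r` with respect to the edge `r s₁` and a `k`-coloring `c` of
`G - r s₁`, encoded by `r` and the list `sl = [s₁, …, s_p]`. -/
structure IsMultifan {V : Type*} (G : SimpleGraph V) (k : ℕ) (c : Sym2 V → ℕ)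
    (r : V) (sl : List V) : Prop where
  one_le : 1 ≤ sl.length
  nodup : (r :: sl).Nodup
  adj : ∀ (i : ℕ) (h : i < sl.length), G.Adj r (sl[i]'h)
  color : ∀ (i : ℕ) (h : i < sl.length), 1 ≤ i →
      ∃ (j : ℕ) (_ : j < i),
        c (s(r, sl[i]'h)) ∈
          missingColors (G.deleteEdges {s(r, sl[0]'(by omega))}) k c
            (sl[j]'(by omega))

/-- The subgraph of `G` whose edges are the edges colored `α` or `β` by `c`;
its components are the `(α,β)`-chains. -/
def chainGraph {V : Type*} (G : SimpleGraph V) (c : Sym2 V → ℕ) (α β : ℕ) :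
    SimpleGraph V where
  Adj x y := G.Adj x y ∧ (c (s(x, y)) = α ∨ c (s(x, y)) = β)
  symm := by
    constructor
    intro x y hxy
    refine ⟨hxy.1.symm, ?_⟩
    rw [Sym2.eq_swap]
    exact hxy.2
  loopless := ⟨fun x hx => G.loopless.irrefl x hx.1⟩

/-- `x` and `y` are `(α,β)`-linked with respect to the coloring `c` of `G`:
they belong to the same `(α,β)`-chain. -/
def Linked {V : Type*} (G : SimpleGraph V) (c : Sym2 V → ℕ) (α β : ℕ) (x y : V) : Prop :=
  (chainGraph G c α β).Reachable x y

/-!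
Delete the critical edge: `H = G - ab` has a `Δ`-edge-coloring, and in none of them is a color
missing at both `a` and `b`, since it could be given to `ab`. As `d_H(a) + d_H(b) = Δ`, the colors
missing at `a` and at `b` then partition `[1, Δ]`, and for `τ` missing at `a` and `σ` missing at `b`
the `(τ, σ)`-chain through `a` is a path ending at `b`. So a Kempe swap at the chain of any other
vertex `x` missing `τ` or `σ` leaves everything at `a` and `b` unchanged.

Let `x - y - a` be a path with `x` at distance two from `{a, b}`. Such swaps make `xy` carry a
color `γ` missing at `a`; then `x` cannot also miss `α = c(ay)`, for exchanging the colors of `ay`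
and `xy` would make `α` missing at both `a` and `b`. Further swaps playing against this obstruction
show that `x` misses at most one color, and none at all when `a` misses two.
-/

open SimpleGraph

section EdgeColoring

variable {V : Type*} {H : SimpleGraph V} {k : ℕ} {c : Sym2 V → ℕ}

theorem mem_Icc_of_mem_missingColors {v : V} {μ : ℕ} (hμ : μ ∈ missingColors H k c v) :
    μ ∈ Set.Icc 1 k :=
  ⟨hμ.1, hμ.2.1⟩

theorem color_ne_of_mem_missingColors {v u : V} {μ : ℕ} (hμ : μ ∈ missingColors H k c v)
    (hu : H.Adj v u) : c s(v, u) ≠ μ :=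
  hμ.2.2 _ hu (Sym2.mem_mk_left _ _)

theorem missingColors_eq_sdiff_image (v : V) :
    missingColors H k c v = Set.Icc 1 k \ (fun u => c s(v, u)) '' H.neighborSet v := by
  ext μ
  simp only [missingColors, Set.mem_ofPred_eq, Set.mem_sdiff, Set.mem_Icc, Set.mem_image,
    mem_neighborSet, not_exists, not_and, and_assoc]
  refine and_congr_right fun _ => and_congr_right fun _ =>
    ⟨fun h u hu => h _ hu (Sym2.mem_mk_left _ _), ?_⟩
  intro h e he hve
  obtain ⟨u, rfl⟩ := Sym2.mem_iff_exists.mp hve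
  exact h u he

theorem finite_missingColors (v : V) : (missingColors H k c v).Finite :=
  (Set.finite_Icc 1 k).subset fun _ => mem_Icc_of_mem_missingColors

namespace IsEdgeColoring

theorem mono {k' : ℕ} (hc : IsEdgeColoring H k c) (hk : k ≤ k') : IsEdgeColoring H k' c :=
  ⟨fun e he => ⟨(hc.1 e he).1, (hc.1 e he).2.trans hk⟩, hc.2⟩

theorem eq_of_color_eq (hc : IsEdgeColoring H k c) {v u w : V} (hu : H.Adj v u)
    (hw : H.Adj v w) (h : c s(v, u) = c s(v, w)) : u = w := by
  by_contra hne
  exact hc.2 _ hu _ hw (fun h => hne (Sym2.congr_right.mp h))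
    ⟨v, Sym2.mem_mk_left _ _, Sym2.mem_mk_left _ _⟩ h

theorem ncard_missingColors_add [Finite V] (hc : IsEdgeColoring H k c) (v : V) :
    (missingColors H k c v).ncard + (H.neighborSet v).ncard = k := by
  have hsub : (fun u => c s(v, u)) '' H.neighborSet v ⊆ Set.Icc 1 k := by
    rintro _ ⟨u, hu, rfl⟩
    exact hc.1 _ hu
  have hinj : Set.InjOn (fun u => c s(v, u)) (H.neighborSet v) :=
    fun u hu w hw h => hc.eq_of_color_eq hu hw h
  have hle := Set.ncard_le_ncard hsub
  rw [hinj.ncard_image, Set.ncard_Icc_nat] at hle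
  rw [missingColors_eq_sdiff_image, Set.ncard_sdiff hsub, hinj.ncard_image, Set.ncard_Icc_nat]
  omega

theorem nonempty_missingColors [Finite V] (hc : IsEdgeColoring H k c) {v : V}
    (hv : (H.neighborSet v).ncard < k) : (missingColors H k c v).Nonempty := by
  have := hc.ncard_missingColors_add v
  exact Set.nonempty_of_ncard_ne_zero (by omega)

end IsEdgeColoring

theorem exists_isEdgeColoring_of_chromIndex_le [Finite V] (G : SimpleGraph V)
    (h : chromIndex G ≤ k) : ∃ c, IsEdgeColoring G k c := by
  obtain ⟨n, ⟨f⟩⟩ := Finite.exists_equiv_fin (Sym2 V)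
  have hne : {k | ∃ c, IsEdgeColoring G k c}.Nonempty :=
    ⟨n, fun e => f e + 1, fun e _ => ⟨Nat.le_add_left _ _, (f e).isLt⟩,
      fun e _ e' _ hne _ h => hne (f.injective (Fin.ext (Nat.add_right_cancel h)))⟩
  obtain ⟨c, hc⟩ := Nat.sInf_mem hne
  exact ⟨c, hc.mono h⟩

theorem not_exists_isEdgeColoring_of_lt_chromIndex (G : SimpleGraph V)
    (h : k < chromIndex G) : ¬∃ c, IsEdgeColoring G k c :=
  fun hc => (Nat.sInf_le hc).not_gt h

theorem IsEdgeColoring.exists_extend_of_mem_missingColors {G : SimpleGraph V} {a b : V} {μ : ℕ}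
    (hc : IsEdgeColoring (G.deleteEdges {s(a, b)}) k c)
    (ha : μ ∈ missingColors (G.deleteEdges {s(a, b)}) k c a)
    (hb : μ ∈ missingColors (G.deleteEdges {s(a, b)}) k c b) : ∃ c', IsEdgeColoring G k c' := by
  classical
  have hdel : ∀ {e}, e ∈ G.edgeSet → e ≠ s(a, b) → e ∈ (G.deleteEdges {s(a, b)}).edgeSet :=
    fun he hne => by simp [edgeSet_deleteEdges, he, hne]
  have hμ : ∀ {e v}, e ∈ G.edgeSet → e ≠ s(a, b) → v ∈ s(a, b) → v ∈ e → c e ≠ μ := by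
    intro e v he hne hv hve
    rcases Sym2.mem_iff.mp hv with rfl | rfl
    · exact ha.2.2 e (hdel he hne) hve
    · exact hb.2.2 e (hdel he hne) hve
  refine ⟨fun e => if e = s(a, b) then μ else c e, fun e he => ?_, ?_⟩
  · dsimp only
    split_ifs with h
    exacts [mem_Icc_of_mem_missingColors ha, hc.1 e (hdel he h)]
  · rintro e he f hf hne ⟨v, hve, hvf⟩
    by_cases he' : e = s(a, b) <;> by_cases hf' : f = s(a, b) <;>
      simp only [he', hf', if_true, if_false]
    · exact absurd (he'.trans hf'.symm) hne
    · exact (hμ hf hf' (he' ▸ hve) hvf).symm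
    · exact hμ he he' (hf' ▸ hvf) hve
    · exact hc.2 e (hdel he he') f (hdel hf hf') hne ⟨v, hve, hvf⟩

end EdgeColoring

section Kempe

variable {V : Type*} {H : SimpleGraph V} {k : ℕ} {c : Sym2 V → ℕ} {τ σ : ℕ} {S : Set V}

def IsChainClosed (H : SimpleGraph V) (c : Sym2 V → ℕ) (τ σ : ℕ) (S : Set V) : Prop :=
  ∀ ⦃u w⦄, u ∈ S → (chainGraph H c τ σ).Adj u w → w ∈ S

theorem isChainClosed_setOf_reachable (v : V) :
    IsChainClosed H c τ σ {u | (chainGraph H c τ σ).Reachable v u} :=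
  fun _ _ hu h => hu.trans h.reachable

open Classical in
noncomputable def kempeSwap (c : Sym2 V → ℕ) (τ σ : ℕ) (S : Set V) (e : Sym2 V) : ℕ :=
  if ∃ v ∈ e, v ∈ S then Equiv.swap τ σ (c e) else c e

theorem kempeSwap_of_mem {v : V} {e : Sym2 V} (hv : v ∈ S) (hve : v ∈ e) :
    kempeSwap c τ σ S e = Equiv.swap τ σ (c e) :=
  if_pos ⟨v, hve, hv⟩

theorem kempeSwap_of_notMem (hS : IsChainClosed H c τ σ S) {v u : V} (hv : v ∉ S)
    (hu : H.Adj v u) : kempeSwap c τ σ S s(v, u) = c s(v, u) := by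
  rw [kempeSwap]
  split_ifs with h
  · obtain ⟨w, hw, hwS⟩ := h
    rcases Sym2.mem_iff.mp hw with rfl | rfl
    · exact absurd hwS hv
    · have hcol : ¬(c s(w, v) = τ ∨ c s(w, v) = σ) := fun hcol => hv (hS hwS ⟨hu.symm, hcol⟩)
      rw [Sym2.eq_swap, not_or] at hcol
      exact Equiv.swap_apply_of_ne_of_ne hcol.1 hcol.2
  · rfl

theorem swap_mem_Icc_iff {μ : ℕ} (hτ : τ ∈ Set.Icc 1 k) (hσ : σ ∈ Set.Icc 1 k) :
    Equiv.swap τ σ μ ∈ Set.Icc 1 k ↔ μ ∈ Set.Icc 1 k := by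
  rw [Equiv.swap_apply_def]
  split_ifs with h₁ h₂ <;> simp_all

theorem IsEdgeColoring.kempeSwap (hc : IsEdgeColoring H k c) (hτ : τ ∈ Set.Icc 1 k)
    (hσ : σ ∈ Set.Icc 1 k) (hS : IsChainClosed H c τ σ S) :
    IsEdgeColoring H k (kempeSwap c τ σ S) := by
  refine ⟨fun e he => ?_, fun e he f hf hne ⟨v, hve, hvf⟩ => ?_⟩
  · unfold _root_.kempeSwap
    split_ifs
    exacts [(swap_mem_Icc_iff hτ hσ).2 (hc.1 e he), hc.1 e he]
  · by_cases hv : v ∈ S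
    · rw [kempeSwap_of_mem hv hve, kempeSwap_of_mem hv hvf]
      exact fun h => hc.2 e he f hf hne ⟨v, hve, hvf⟩ ((Equiv.swap τ σ).injective h)
    · obtain ⟨u, rfl⟩ := Sym2.mem_iff_exists.mp hve
      obtain ⟨w, rfl⟩ := Sym2.mem_iff_exists.mp hvf
      rw [kempeSwap_of_notMem hS hv he, kempeSwap_of_notMem hS hv hf]
      exact hc.2 _ he _ hf hne ⟨v, hve, hvf⟩

theorem missingColors_kempeSwap_of_notMem (hS : IsChainClosed H c τ σ S) {v : V} (hv : v ∉ S) :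
    missingColors H k (kempeSwap c τ σ S) v = missingColors H k c v := by
  simp only [missingColors_eq_sdiff_image]
  congr 1
  exact Set.image_congr fun u hu => kempeSwap_of_notMem hS hv hu

theorem missingColors_kempeSwap_of_mem (hτ : τ ∈ Set.Icc 1 k) (hσ : σ ∈ Set.Icc 1 k) {v : V}
    (hv : v ∈ S) :
    missingColors H k (kempeSwap c τ σ S) v = Equiv.swap τ σ ⁻¹' missingColors H k c v := by
  ext μ
  simp only [missingColors_eq_sdiff_image, Set.mem_preimage, Set.mem_sdiff,
    swap_mem_Icc_iff hτ hσ, Set.mem_image, kempeSwap_of_mem hv (Sym2.mem_mk_left v _),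
    Equiv.swap_apply_eq_iff]

namespace IsEdgeColoring

theorem ncard_neighborSet_chainGraph_le (hc : IsEdgeColoring H k c) (v : V) {T : Set ℕ}
    (hT : T.Finite) (hvT : ∀ u, (chainGraph H c τ σ).Adj v u → c s(v, u) ∈ T) :
    ((chainGraph H c τ σ).neighborSet v).ncard ≤ T.ncard :=
  Set.ncard_le_ncard_of_injOn _ hvT (fun _ hu _ hw h => hc.eq_of_color_eq hu.1 hw.1 h) hT

theorem ncard_neighborSet_chainGraph_le_two (hc : IsEdgeColoring H k c) (v : V) :
    ((chainGraph H c τ σ).neighborSet v).ncard ≤ 2 :=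
  (hc.ncard_neighborSet_chainGraph_le v (Set.toFinite {τ, σ}) fun _ hu => hu.2).trans
    ((Set.ncard_insert_le _ _).trans (by rw [Set.ncard_singleton]))

theorem ncard_neighborSet_chainGraph_le_one (hc : IsEdgeColoring H k c) {v : V}
    (hv : τ ∈ missingColors H k c v ∨ σ ∈ missingColors H k c v) :
    ((chainGraph H c τ σ).neighborSet v).ncard ≤ 1 := by
  rcases hv with hv | hv
  · refine (hc.ncard_neighborSet_chainGraph_le v (Set.finite_singleton σ) fun u hu => ?_).trans_eq
      (Set.ncard_singleton σ)
    exact hu.2.resolve_left (color_ne_of_mem_missingColors hv hu.1)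
  · refine (hc.ncard_neighborSet_chainGraph_le v (Set.finite_singleton τ) fun u hu => ?_).trans_eq
      (Set.ncard_singleton τ)
    exact hu.2.resolve_right (color_ne_of_mem_missingColors hv hu.1)

end IsEdgeColoring

end Kempe

namespace SimpleGraph

variable {V : Type*} {C : SimpleGraph V} {a b w : V} {p : C.Walk a b}

theorem Walk.IsPath.ncard_neighborSet_toSubgraph_eq_two (hp : p.IsPath) (hw : w ∈ p.support)
    (hwa : w ≠ a) (hwb : w ≠ b) : (p.toSubgraph.neighborSet w).ncard = 2 := by
  obtain ⟨i, rfl, hi⟩ := Walk.mem_support_iff_exists_getVert.mp hw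
  refine hp.ncard_neighborSet_toSubgraph_internal_eq_two (fun h => hwa ?_)
    (hi.lt_of_ne fun h => hwb ?_)
  · rw [h, Walk.getVert_zero]
  · rw [h, Walk.getVert_length]

variable [Finite V]

theorem Walk.IsPath.mem_support_of_adj (hC : ∀ v, (C.neighborSet v).ncard ≤ 2) (hp : p.IsPath)
    (hab : a ≠ b) (ha : (C.neighborSet a).ncard ≤ 1) (hb : (C.neighborSet b).ncard ≤ 1) {z : V}
    (hw : w ∈ p.support) (hwz : C.Adj w z) : z ∈ p.support := by
  have hnil : ¬p.Nil := fun h => hab h.eq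
  have hle : (C.neighborSet w).ncard ≤ (p.toSubgraph.neighborSet w).ncard := by
    by_cases hwa : w = a
    · subst hwa
      rwa [hp.neighborSet_toSubgraph_startpoint hnil, Set.ncard_singleton]
    by_cases hwb : w = b
    · subst hwb
      rwa [hp.neighborSet_toSubgraph_endpoint hnil, Set.ncard_singleton]
    rw [hp.ncard_neighborSet_toSubgraph_eq_two hw hwa hwb]
    exact hC w
  have hnbr := Set.eq_of_subset_of_ncard_le (p.toSubgraph.neighborSet_subset w) hle
  rw [← Walk.mem_verts_toSubgraph]
  have hwz' : z ∈ p.toSubgraph.neighborSet w := by rw [hnbr]; exact hwz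
  exact Subgraph.Adj.snd_mem hwz'

theorem Reachable.not_reachable_of_ncard_neighborSet_le_one
    (hC : ∀ v, (C.neighborSet v).ncard ≤ 2) {x : V} (hab : a ≠ b) (hxa : x ≠ a) (hxb : x ≠ b)
    (ha : (C.neighborSet a).ncard ≤ 1) (hb : (C.neighborSet b).ncard ≤ 1)
    (hx : (C.neighborSet x).ncard ≤ 1) (hr : C.Reachable a b) : ¬C.Reachable a x := by
  classical
  rintro ⟨q⟩
  obtain ⟨p, hp⟩ := hr.some.toPath
  have hxp : x ∈ p.support := by
    by_contra hxp
    obtain ⟨d, -, hd, hd'⟩ := q.exists_boundary_dart {v | v ∈ p.support} p.start_mem_support hxp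
    exact hd' (hp.mem_support_of_adj hC hab ha hb hd d.adj)
  have h2 := (hp.ncard_neighborSet_toSubgraph_eq_two hxp hxa hxb).symm.le.trans
    (Set.ncard_le_ncard (p.toSubgraph.neighborSet_subset x))
  omega

end SimpleGraph

section Config

variable {V : Type*} {H : SimpleGraph V} {k : ℕ} {c : Sym2 V → ℕ}

/-- The setting of the theorem, for `H = G - ab` and `k = Δ`. -/
structure FullDeficiencyConfig (H : SimpleGraph V) (k : ℕ) (a b x y : V) : Prop where
  ne_ab : a ≠ b
  ncard_add : (H.neighborSet a).ncard + (H.neighborSet b).ncard = k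
  disjoint : ∀ c, IsEdgeColoring H k c →
    Disjoint (missingColors H k c a) (missingColors H k c b)
  adj_xy : H.Adj x y
  adj_ya : H.Adj y a
  ne_xa : x ≠ a
  ne_xb : x ≠ b
  ne_yb : y ≠ b

local notation "𝓜" => missingColors H k

namespace FullDeficiencyConfig

variable {a b x y : V}

theorem chainGraph_reachable (p : FullDeficiencyConfig H k a b x y) (hc : IsEdgeColoring H k c)
    {τ σ : ℕ} (hτ : τ ∈ 𝓜 c a) (hσ : σ ∈ 𝓜 c b) : (chainGraph H c τ σ).Reachable a b := by
  by_contra hab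
  set S : Set V := {u | (chainGraph H c τ σ).Reachable b u}
  have hS : IsChainClosed H c τ σ S := isChainClosed_setOf_reachable b
  have hbS : b ∈ S := Reachable.refl b
  have haS : a ∉ S := fun h => hab h.symm
  have hτk := mem_Icc_of_mem_missingColors hτ
  have hσk := mem_Icc_of_mem_missingColors hσ
  have ha : τ ∈ 𝓜 (kempeSwap c τ σ S) a := by
    rwa [missingColors_kempeSwap_of_notMem hS haS]
  have hb : τ ∈ 𝓜 (kempeSwap c τ σ S) b := by
    rwa [missingColors_kempeSwap_of_mem hτk hσk hbS, Set.mem_preimage, Equiv.swap_apply_left]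
  exact (p.disjoint _ (hc.kempeSwap hτk hσk hS)).notMem_of_mem_left ha hb

theorem color_xy_ne_color_ay (p : FullDeficiencyConfig H k a b x y) (hc : IsEdgeColoring H k c) :
    c s(x, y) ≠ c s(a, y) := by
  intro h
  rw [Sym2.eq_swap, Sym2.eq_swap (a := a)] at h
  exact p.ne_xa (hc.eq_of_color_eq p.adj_xy.symm p.adj_ya h)

variable [Finite V]

theorem mem_missingColors_a_or_b (p : FullDeficiencyConfig H k a b x y)
    (hc : IsEdgeColoring H k c) {μ : ℕ} (hμ : μ ∈ Set.Icc 1 k) : μ ∈ 𝓜 c a ∨ μ ∈ 𝓜 c b := by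
  have ha := hc.ncard_missingColors_add a
  have hb := hc.ncard_missingColors_add b
  have hk := p.ncard_add
  have hunion : 𝓜 c a ∪ 𝓜 c b = Set.Icc 1 k := by
    refine Set.eq_of_subset_of_ncard_le
      (Set.union_subset (fun _ => mem_Icc_of_mem_missingColors)
        fun _ => mem_Icc_of_mem_missingColors) ?_ (Set.finite_Icc 1 k)
    rw [Set.ncard_union_eq (p.disjoint c hc) (finite_missingColors a) (finite_missingColors b),
      Set.ncard_Icc_nat]
    omega
  rwa [← hunion] at hμ

theorem exists_kempeSwap (p : FullDeficiencyConfig H k a b x y) (hc : IsEdgeColoring H k c)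
    {τ σ : ℕ} (hτ : τ ∈ 𝓜 c a) (hσ : σ ∈ 𝓜 c b) (hx : τ ∈ 𝓜 c x ∨ σ ∈ 𝓜 c x) :
    ∃ c', IsEdgeColoring H k c' ∧ 𝓜 c' a = 𝓜 c a ∧ 𝓜 c' b = 𝓜 c b ∧
      𝓜 c' x = Equiv.swap τ σ ⁻¹' 𝓜 c x ∧ c' s(a, y) = c s(a, y) ∧
      c' s(x, y) = Equiv.swap τ σ (c s(x, y)) := by
  have hτk := mem_Icc_of_mem_missingColors hτ
  have hσk := mem_Icc_of_mem_missingColors hσ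
  have hC := hc.ncard_neighborSet_chainGraph_le_two (τ := τ) (σ := σ)
  have ha := hc.ncard_neighborSet_chainGraph_le_one (σ := σ) (Or.inl hτ)
  have hb := hc.ncard_neighborSet_chainGraph_le_one (τ := τ) (Or.inr hσ)
  have hx := hc.ncard_neighborSet_chainGraph_le_one hx
  have hab := p.chainGraph_reachable hc hτ hσ
  have hxa : ¬(chainGraph H c τ σ).Reachable x a := fun h =>
    hab.not_reachable_of_ncard_neighborSet_le_one hC p.ne_ab p.ne_xa p.ne_xb ha hb hx h.symm
  have hxb : ¬(chainGraph H c τ σ).Reachable x b := fun h =>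
    hab.symm.not_reachable_of_ncard_neighborSet_le_one hC p.ne_ab.symm p.ne_xb p.ne_xa hb ha hx
      h.symm
  set S : Set V := {u | (chainGraph H c τ σ).Reachable x u}
  have hS : IsChainClosed H c τ σ S := isChainClosed_setOf_reachable x
  have hxS : x ∈ S := Reachable.refl x
  exact ⟨_, hc.kempeSwap hτk hσk hS, missingColors_kempeSwap_of_notMem hS hxa,
    missingColors_kempeSwap_of_notMem hS hxb, missingColors_kempeSwap_of_mem hτk hσk hxS,
    kempeSwap_of_notMem hS hxa p.adj_ya.symm, kempeSwap_of_mem hxS (Sym2.mem_mk_left x y)⟩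

theorem color_ay_mem_missingColors_b (p : FullDeficiencyConfig H k a b x y)
    (hc : IsEdgeColoring H k c) : c s(a, y) ∈ 𝓜 c b :=
  (p.mem_missingColors_a_or_b hc (hc.1 _ p.adj_ya.symm)).resolve_left
    fun h => color_ne_of_mem_missingColors h p.adj_ya.symm rfl

theorem color_ay_notMem_missingColors_x (p : FullDeficiencyConfig H k a b x y)
    (hc : IsEdgeColoring H k c) (hγ : c s(x, y) ∈ 𝓜 c a) : c s(a, y) ∉ 𝓜 c x := by
  intro hα
  -- `a - y - x` is a whole `(c(ay), c(xy))`-chain; swapping it frees `c(ay)` at `a`.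
  have hS : IsChainClosed H c (c s(a, y)) (c s(x, y)) {a, y, x} := by
    rintro u w hu ⟨huw, hcol⟩
    simp only [Set.mem_insert_iff, Set.mem_singleton_iff] at hu ⊢
    rcases hu with rfl | rfl | rfl
    · have := hcol.resolve_right (color_ne_of_mem_missingColors hγ huw)
      exact Or.inr (Or.inl (hc.eq_of_color_eq huw p.adj_ya.symm this))
    · rw [Sym2.eq_swap (a := a), Sym2.eq_swap (a := x)] at hcol
      rcases hcol with h | h
      · exact Or.inl (hc.eq_of_color_eq huw p.adj_ya h)
      · exact Or.inr (Or.inr (hc.eq_of_color_eq huw p.adj_xy.symm h))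
    · have := hcol.resolve_left (color_ne_of_mem_missingColors hα huw)
      exact Or.inr (Or.inl (hc.eq_of_color_eq huw p.adj_xy this))
  have hαk := hc.1 s(a, y) p.adj_ya.symm
  have hγk := hc.1 s(x, y) p.adj_xy
  have haS : a ∈ ({a, y, x} : Set V) := Set.mem_insert a _
  have hbS : b ∉ ({a, y, x} : Set V) := by
    simp only [Set.mem_insert_iff, Set.mem_singleton_iff, not_or]
    exact ⟨p.ne_ab.symm, p.ne_yb.symm, p.ne_xb.symm⟩
  refine (p.disjoint _ (hc.kempeSwap hαk hγk hS)).notMem_of_mem_left (a := c s(a, y)) ?_ ?_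
  · rwa [missingColors_kempeSwap_of_mem hαk hγk haS, Set.mem_preimage, Equiv.swap_apply_left]
  · rw [missingColors_kempeSwap_of_notMem hS hbS]
    exact p.color_ay_mem_missingColors_b hc

theorem notMem_missingColors_a_of_mem_x (p : FullDeficiencyConfig H k a b x y)
    (hc : IsEdgeColoring H k c) (hγ : c s(x, y) ∈ 𝓜 c a) {β : ℕ} (hβ : β ∈ 𝓜 c x) :
    β ∉ 𝓜 c a := by
  intro hβa
  obtain ⟨c', hc', ha', -, hx', hay', hxy'⟩ :=
    p.exists_kempeSwap hc hβa (p.color_ay_mem_missingColors_b hc) (Or.inl hβ)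
  refine p.color_ay_notMem_missingColors_x hc' ?_ ?_
  · rw [hxy', Equiv.swap_apply_of_ne_of_ne (color_ne_of_mem_missingColors hβ p.adj_xy)
      (p.color_xy_ne_color_ay hc), ha']
    exact hγ
  · rw [hay', hx', Set.mem_preimage, Equiv.swap_apply_right]
    exact hβ

theorem mem_missingColors_b_of_mem_x (p : FullDeficiencyConfig H k a b x y)
    (hc : IsEdgeColoring H k c) (hγ : c s(x, y) ∈ 𝓜 c a) {β : ℕ} (hβ : β ∈ 𝓜 c x) :
    β ∈ 𝓜 c b :=
  (p.mem_missingColors_a_or_b hc (mem_Icc_of_mem_missingColors hβ)).resolve_left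
    (p.notMem_missingColors_a_of_mem_x hc hγ hβ)

theorem missingColors_a_subsingleton (p : FullDeficiencyConfig H k a b x y)
    (hc : IsEdgeColoring H k c) (hγ : c s(x, y) ∈ 𝓜 c a) {β : ℕ} (hβ : β ∈ 𝓜 c x) :
    (𝓜 c a).Subsingleton := by
  suffices h : ∀ σ ∈ 𝓜 c a, σ = c s(x, y) from fun _ h₁ _ h₂ => (h _ h₁).trans (h _ h₂).symm
  intro σ hσ
  by_contra hσγ
  obtain ⟨c', hc', ha', -, hx', -, hxy'⟩ :=
    p.exists_kempeSwap hc hσ (p.mem_missingColors_b_of_mem_x hc hγ hβ) (Or.inr hβ)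
  have hγ' : c' s(x, y) ∈ 𝓜 c' a := by
    rw [hxy', Equiv.swap_apply_of_ne_of_ne (Ne.symm hσγ)
      (color_ne_of_mem_missingColors hβ p.adj_xy), ha']
    exact hγ
  refine p.notMem_missingColors_a_of_mem_x hc' hγ' (β := σ) ?_ (ha' ▸ hσ)
  rw [hx', Set.mem_preimage, Equiv.swap_apply_left]
  exact hβ

theorem notMem_missingColors_a_of_color_ay_mem (p : FullDeficiencyConfig H k a b x y)
    (hc : IsEdgeColoring H k c) (hα : c s(a, y) ∈ 𝓜 c x) {τ : ℕ} (hτ : τ ∈ 𝓜 c x) :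
    τ ∉ 𝓜 c a := by
  intro hτa
  rcases p.mem_missingColors_a_or_b hc (hc.1 s(x, y) p.adj_xy) with hγ | hγ
  · exact p.color_ay_notMem_missingColors_x hc hγ hα
  obtain ⟨c', hc', ha', -, hx', hay', hxy'⟩ := p.exists_kempeSwap hc hτa hγ (Or.inl hτ)
  refine p.color_ay_notMem_missingColors_x hc' ?_ ?_
  · rw [hxy', Equiv.swap_apply_right, ha']
    exact hτa
  · rw [hay', hx', Set.mem_preimage, Equiv.swap_apply_of_ne_of_ne
      (color_ne_of_mem_missingColors hτa p.adj_ya.symm) (p.color_xy_ne_color_ay hc).symm]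
    exact hα

theorem missingColors_x_subsingleton (p : FullDeficiencyConfig H k a b x y)
    (hc : IsEdgeColoring H k c) (hγ : c s(x, y) ∈ 𝓜 c a) : (𝓜 c x).Subsingleton := by
  intro β₁ h₁ β₂ h₂
  by_contra hne
  set γ := c s(x, y)
  set α := c s(a, y)
  -- Swapping `(γ, β₁)`, `(γ, α)` and `(γ, β₂)` at `x` leaves `x` missing both `α` and `γ`.
  have hαγ : α ≠ γ := (p.color_xy_ne_color_ay hc).symm
  have hγβ₂ : γ ≠ β₂ := color_ne_of_mem_missingColors h₂ p.adj_xy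
  have hαβ₂ : α ≠ β₂ := by
    rintro h
    exact p.color_ay_notMem_missingColors_x hc hγ (show α ∈ 𝓜 c x by rw [h]; exact h₂)
  obtain ⟨c₁, hc₁, ha₁, hb₁, hx₁, hay₁, -⟩ :=
    p.exists_kempeSwap hc hγ (p.mem_missingColors_b_of_mem_x hc hγ h₁) (Or.inr h₁)
  have hγx₁ : γ ∈ 𝓜 c₁ x := by
    rw [hx₁, Set.mem_preimage, Equiv.swap_apply_left]
    exact h₁
  have hβ₂x₁ : β₂ ∈ 𝓜 c₁ x := by
    rw [hx₁, Set.mem_preimage, Equiv.swap_apply_of_ne_of_ne hγβ₂.symm (Ne.symm hne)]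
    exact h₂
  obtain ⟨c₂, hc₂, ha₂, hb₂, hx₂, hay₂, -⟩ := p.exists_kempeSwap hc₁ (τ := γ) (σ := α)
    (ha₁ ▸ hγ) (hb₁ ▸ p.color_ay_mem_missingColors_b hc) (Or.inl hγx₁)
  have hαx₂ : α ∈ 𝓜 c₂ x := by
    rw [hx₂, Set.mem_preimage, Equiv.swap_apply_right]
    exact hγx₁
  have hβ₂x₂ : β₂ ∈ 𝓜 c₂ x := by
    rw [hx₂, Set.mem_preimage, Equiv.swap_apply_of_ne_of_ne hγβ₂.symm hαβ₂.symm]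
    exact hβ₂x₁
  obtain ⟨c₃, hc₃, ha₃, -, hx₃, hay₃, -⟩ := p.exists_kempeSwap hc₂ (τ := γ)
    (by rw [ha₂, ha₁]; exact hγ)
    (by rw [hb₂, hb₁]; exact p.mem_missingColors_b_of_mem_x hc hγ h₂) (Or.inr hβ₂x₂)
  refine p.notMem_missingColors_a_of_color_ay_mem hc₃ (τ := γ) ?_ ?_
    (by rw [ha₃, ha₂, ha₁]; exact hγ)
  · rw [hay₃, hay₂, hay₁, hx₃, Set.mem_preimage, Equiv.swap_apply_of_ne_of_ne hαγ hαβ₂]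
    exact hαx₂
  · rw [hx₃, Set.mem_preimage, Equiv.swap_apply_left]
    exact hβ₂x₂

theorem exists_color_xy_mem_missingColors_a (p : FullDeficiencyConfig H k a b x y)
    (hda : (H.neighborSet a).ncard < k) (hc : IsEdgeColoring H k c) {β : ℕ} (hβ : β ∈ 𝓜 c x) :
    ∃ c', IsEdgeColoring H k c' ∧ c' s(x, y) ∈ 𝓜 c' a := by
  rcases p.mem_missingColors_a_or_b hc (hc.1 s(x, y) p.adj_xy) with hγ | hγ
  · exact ⟨c, hc, hγ⟩
  obtain ⟨c₁, τ, hc₁, hγ₁, hτx, hτa⟩ : ∃ c₁ τ, IsEdgeColoring H k c₁ ∧ c₁ s(x, y) ∈ 𝓜 c₁ b ∧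
      τ ∈ 𝓜 c₁ x ∧ τ ∈ 𝓜 c₁ a := by
    rcases p.mem_missingColors_a_or_b hc (mem_Icc_of_mem_missingColors hβ) with hβa | hβb
    · exact ⟨c, β, hc, hγ, hβ, hβa⟩
    obtain ⟨τ, hτ⟩ := hc.nonempty_missingColors hda
    obtain ⟨c₁, hc₁, ha₁, hb₁, hx₁, -, hxy₁⟩ := p.exists_kempeSwap hc hτ hβb (Or.inr hβ)
    have hγτ : c s(x, y) ≠ τ := fun h => (p.disjoint c hc).notMem_of_mem_left hτ (h ▸ hγ)
    refine ⟨c₁, τ, hc₁, ?_, ?_, ha₁ ▸ hτ⟩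
    · rw [hxy₁, Equiv.swap_apply_of_ne_of_ne hγτ (color_ne_of_mem_missingColors hβ p.adj_xy),
        hb₁]
      exact hγ
    · rw [hx₁, Set.mem_preimage, Equiv.swap_apply_left]
      exact hβ
  obtain ⟨c₂, hc₂, ha₂, -, -, -, hxy₂⟩ := p.exists_kempeSwap hc₁ hτa hγ₁ (Or.inl hτx)
  refine ⟨c₂, hc₂, ?_⟩
  rw [hxy₂, Equiv.swap_apply_right, ha₂]
  exact hτa

theorem ncard_neighborSet_x_bounds (p : FullDeficiencyConfig H k a b x y)
    (hda : (H.neighborSet a).ncard < k) (hc : IsEdgeColoring H k c) :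
    k - 1 ≤ (H.neighborSet x).ncard ∧
      ((H.neighborSet a).ncard + 2 ≤ k → (H.neighborSet x).ncard = k) := by
  have hx := hc.ncard_missingColors_add x
  rcases (𝓜 c x).eq_empty_or_nonempty with h | ⟨β, hβ⟩
  · rw [h, Set.ncard_empty] at hx
    omega
  obtain ⟨c', hc', hγ⟩ := p.exists_color_xy_mem_missingColors_a hda hc hβ
  have hx' := hc'.ncard_missingColors_add x
  have ha' := hc'.ncard_missingColors_add a
  have hpos := (Set.ncard_pos (finite_missingColors x)).2 ⟨β, hβ⟩
  obtain ⟨β', hβ'⟩ := Set.nonempty_of_ncard_ne_zero (s := 𝓜 c' x) (by omega)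
  have hxle := (Set.ncard_le_one (finite_missingColors x)).2
    (p.missingColors_x_subsingleton hc' hγ)
  have hale := (Set.ncard_le_one (finite_missingColors a)).2
    (p.missingColors_a_subsingleton hc' hγ hβ')
  omega

end FullDeficiencyConfig

end Config

namespace SimpleGraph

variable {V : Type*} {G : SimpleGraph V} {a b u v : V}

theorem exists_adj_adj_of_dist_eq_two (h : G.dist u v = 2) : ∃ w, G.Adj u w ∧ G.Adj w v := by
  have hr := Reachable.of_dist_ne_zero (h ▸ two_ne_zero)
  have he : G.edist u v = 2 := by
    rw [← hr.coe_dist_eq_edist, h]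
    rfl
  obtain ⟨w, hw⟩ := (edist_eq_two_iff.mp he).2.2
  rw [mem_commonNeighbors] at hw
  exact ⟨w, hw.1, hw.2.symm⟩

theorem not_adj_of_two_le_dist (h : 2 ≤ G.dist u v) : ¬G.Adj u v := fun hadj => by
  rw [dist_eq_one_iff_adj.mpr hadj] at h
  omega

theorem neighborSet_deleteEdges_left :
    (G.deleteEdges {s(a, b)}).neighborSet a = G.neighborSet a \ {b} := by
  ext w
  simp only [mem_neighborSet, deleteEdges_adj, Set.mem_singleton_iff, Set.mem_sdiff]
  refine and_congr_right fun h => ⟨fun hne hwb => hne (by rw [hwb]), fun hwb he => ?_⟩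
  rcases Sym2.eq_iff.mp he with ⟨-, rfl⟩ | ⟨rfl, rfl⟩
  exacts [hwb rfl, h.ne rfl]

theorem neighborSet_deleteEdges_of_ne (hva : v ≠ a) (hvb : v ≠ b) :
    (G.deleteEdges {s(a, b)}).neighborSet v = G.neighborSet v := by
  ext w
  simp [deleteEdges_adj, hva, hvb]

theorem ncard_neighborSet [Fintype V] [DecidableRel G.Adj] (v : V) :
    (G.neighborSet v).ncard = G.degree v := by
  rw [← card_neighborSet_eq_degree, Set.ncard_eq_toFinset_card', Set.toFinset_card]

end SimpleGraph

theorem degree_bounds_of_dist_eq_two {V : Type*} [Fintype V] {G : SimpleGraph V}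
    [DecidableRel G.Adj] {Δ : ℕ} {a b x : V} (hΔ : G.maxDegree = Δ)
    (hG : ¬∃ c, IsEdgeColoring G Δ c) (hH : ∃ c, IsEdgeColoring (G.deleteEdges {s(a, b)}) Δ c)
    (hab : G.Adj a b) (hfd : G.degree a + G.degree b = Δ + 2) (hxa : x ≠ a) (hxb : x ≠ b)
    (hdxa : G.dist x a = 2) (hdxb : 2 ≤ G.dist x b) :
    Δ - 1 ≤ G.degree x ∧ (G.degree a < Δ → G.degree x = Δ) := by
  obtain ⟨y, hxy, hya⟩ := exists_adj_adj_of_dist_eq_two hdxa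
  have hyb : y ≠ b := by
    rintro rfl
    exact not_adj_of_two_le_dist hdxb hxy
  have ha : ((G.deleteEdges {s(a, b)}).neighborSet a).ncard + 1 = G.degree a := by
    rw [neighborSet_deleteEdges_left,
      Set.ncard_sdiff_singleton_add_one (show b ∈ G.neighborSet a from hab), ncard_neighborSet]
  have hb : ((G.deleteEdges {s(a, b)}).neighborSet b).ncard + 1 = G.degree b := by
    rw [Sym2.eq_swap, neighborSet_deleteEdges_left,
      Set.ncard_sdiff_singleton_add_one (show a ∈ G.neighborSet b from hab.symm), ncard_neighborSet]
  have hx : ((G.deleteEdges {s(a, b)}).neighborSet x).ncard = G.degree x := by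
    rw [neighborSet_deleteEdges_of_ne hxa hxb, ncard_neighborSet]
  have p : FullDeficiencyConfig (G.deleteEdges {s(a, b)}) Δ a b x y :=
    { ne_ab := hab.ne
      ncard_add := by omega
      disjoint := fun c hc => Set.disjoint_left.2 fun _ ha hb =>
        hG (hc.exists_extend_of_mem_missingColors ha hb)
      adj_xy := by simp [deleteEdges_adj, hxy, hxa, hxb]
      adj_ya := by simp [deleteEdges_adj, hya, hya.ne, hyb]
      ne_xa := hxa
      ne_xb := hxb
      ne_yb := hyb }
  obtain ⟨c, hc⟩ := hH
  have hda : G.degree a ≤ Δ := hΔ ▸ G.degree_le_maxDegree a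
  have := p.ncard_neighborSet_x_bounds (by omega) hc
  omega

theorem fullDeficiencyPair_distance_two_degree_general
    {V : Type*} [Fintype V]
    (Δ : ℕ) (G : SimpleGraph V) [DecidableRel G.Adj]
    (hΔ : G.maxDegree = Δ) (hclass2 : chromIndex G = Δ + 1)
    (a b : V) (hab : G.Adj a b) (hfd : G.degree a + G.degree b = Δ + 2)
    (hcrit : IsCriticalEdge G (s(a, b)))
    (x : V) (hxa : x ≠ a) (hxb : x ≠ b)
    (hdist : min (G.dist x a) (G.dist x b) = 2) :
    Δ - 1 ≤ G.degree x ∧ ((G.degree a < Δ ∧ G.degree b < Δ) → G.degree x = Δ) := by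
  have hG := not_exists_isEdgeColoring_of_lt_chromIndex G (k := Δ) (by omega)
  have hH := exists_isEdgeColoring_of_chromIndex_le (G.deleteEdges {s(a, b)}) (k := Δ)
    (by have := hcrit.2; omega)
  have hxa2 : 2 ≤ G.dist x a := hdist ▸ min_le_left _ _
  have hxb2 : 2 ≤ G.dist x b := hdist ▸ min_le_right _ _
  rcases min_choice (G.dist x a) (G.dist x b) with h | h
  · exact (degree_bounds_of_dist_eq_two hΔ hG hH hab hfd hxa hxb (h ▸ hdist) hxb2).imp_right
      fun h' hlt => h' hlt.1
  · rw [Sym2.eq_swap] at hH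
    exact (degree_bounds_of_dist_eq_two hΔ hG hH hab.symm (by omega) hxb hxa (h ▸ hdist)
      hxa2).imp_right fun h' hlt => h' hlt.2

/-- Let `G` be an `n`-vertex Class 2 graph with maximum degree `Δ` having
a full-deficiency pair `(a,b)` with `ab` a critical edge. Then every vertex
`x ∈ V(G) \ {a,b}` with `dist_G(x, {a,b}) = 2` has `d_G(x) ≥ Δ - 1`; furthermore, if
`d_G(a) < Δ` and `d_G(b) < Δ`, then `d_G(x) = Δ`. -/
theorem fullDeficiencyPair_distance_two_degree
    {V : Type*} [Fintype V] [DecidableEq V]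
    (n Δ : ℕ) (G : SimpleGraph V) [DecidableRel G.Adj]
    (hcard : Fintype.card V = n)
    (hΔ : G.maxDegree = Δ) (hclass2 : chromIndex G = Δ + 1)
    (a b : V) (hab : G.Adj a b) (hfd : G.degree a + G.degree b = Δ + 2)
    (hcrit : IsCriticalEdge G (s(a, b)))
    (x : V) (hxa : x ≠ a) (hxb : x ≠ b)
    (hdist : min (G.dist x a) (G.dist x b) = 2) :
    Δ - 1 ≤ G.degree x ∧ ((G.degree a < Δ ∧ G.degree b < Δ) → G.degree x = Δ) :=
  fullDeficiencyPair_distance_two_degree_general Δ G hΔ hclass2 a b hab hfd hcrit x hxa hxb hdist
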